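/- (Strong stationary duality for ↓-Möbius monotone chains.) Let E be a finite partially ordered set with a unique maximal element, and let P be an irreducible stochastic matrix on E with strictly positive stationary distribution π (πP = π). Let ←P(e,e') = π(e')P(e',e)/π(e) be the time-reversed matrix, H(e) = Σ_{e'≤e} π(e'), and g(e) = ν(e)/π(e) for a given initial probability vector ν. Assume (i) g is ↓-Möbius monotone and (ii) ←P is ↓-Möbius monotone. Define Λ(e_j,e_i) = 1{e_i ≤ e_j}·π(e_i)/H(e_j), ν*(e_i) = H(e_i)·Σ_{e ≥ e_i} μ(e_i,e) g(e), and P*(e_i,e_j) = (H(e_j)/H(e_i))·Σ_{e ≥ e_j} μ(e_j,e)·←P(e,{e_i}↓), where ←P(e,A) = Σ_{e'∈A} ←P(e,e') and {e_i}↓ = {e' : e' ≤ e_i}. Then Λ is a stochastic matrix, ν* is a probability vector with ν = ν*Λ, and P* is a stochastic matrix with ΛP = P*Λ. -/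

import Mathlib

/-!
Write `C` for the zeta matrix, `D_v` for the diagonal matrix of a vector `v`, and `H = πC`.
Then `Λ = D_H⁻¹ Cᵀ D_π`, `ν* = H · C⁻¹g` and `P* = D_H⁻¹ (C⁻¹ ←P C)ᵀ D_H`, so every claim is
a matrix identity: `Λ𝟙 = 𝟙` because `Cᵀπ = H`; `P*𝟙 = 𝟙` because `π ←P = π`; `ν*Λ = gD_π = ν`
because `CC⁻¹ = 1`; and `ΛP = P*Λ` because `←Pᵀ = D_π P D_π⁻¹`. The two Möbius monotonicity
hypotheses are exactly the nonnegativity of `ν*` and `P*`. The filtered sums of the statement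
become matrix products because `C⁻¹ = μ` vanishes off `{e ≤ e'}`.
-/

open Finset Matrix

/-- The zeta matrix of a finite poset: `C(e,e') = 1` if `e ≤ e'`, else `0`.
Its matrix inverse is the Möbius function `μ` of the poset. -/
noncomputable def zeta (E : Type*) [Fintype E] [PartialOrder E]
    [DecidableRel ((· ≤ ·) : E → E → Prop)] : Matrix E E ℝ :=
  Matrix.of fun e e' => if e ≤ e' then 1 else 0

/-- `P` is a stochastic matrix: nonnegative entries, rows summing to 1. -/
def IsStochastic {E : Type*} [Fintype E] (P : Matrix E E ℝ) : Prop :=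
  (∀ e e', 0 ≤ P e e') ∧ ∀ e, ∑ e', P e e' = 1

/-- `π` is a probability vector. -/
def IsProbVec {E : Type*} [Fintype E] (π : E → ℝ) : Prop :=
  (∀ e, 0 ≤ π e) ∧ ∑ e, π e = 1

section Stochastic

variable {E : Type*} [Fintype E]

lemma mulVec_one_apply (P : Matrix E E ℝ) (e : E) : (P *ᵥ 1) e = ∑ e', P e e' := by
  simp only [mulVec, dotProduct, Pi.one_apply, mul_one]

lemma IsStochastic.mulVec_one {P : Matrix E E ℝ} (hP : IsStochastic P) : P *ᵥ 1 = 1 :=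
  funext fun e => by rw [mulVec_one_apply, hP.2, Pi.one_apply]

lemma isStochastic_of_mulVec_one {P : Matrix E E ℝ} (h0 : ∀ e e', 0 ≤ P e e')
    (h1 : P *ᵥ 1 = 1) : IsStochastic P :=
  ⟨h0, fun e => by rw [← mulVec_one_apply, h1, Pi.one_apply]⟩

lemma IsStochastic.sum_vecMul {P : Matrix E E ℝ} (hP : IsStochastic P) (x : E → ℝ) :
    ∑ e, (x ᵥ* P) e = ∑ e, x e := by
  rw [← dotProduct_one, ← dotProduct_one, ← dotProduct_mulVec, hP.mulVec_one]

end Stochastic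

section Zeta

variable {E : Type*} [Fintype E] [PartialOrder E] [DecidableRel ((· ≤ ·) : E → E → Prop)]

lemma zeta_apply (e e' : E) : zeta E e e' = if e ≤ e' then 1 else 0 := rfl

lemma vecMul_zeta_apply (v : E → ℝ) (e : E) :
    (v ᵥ* zeta E) e = ∑ e' ∈ univ.filter (· ≤ e), v e' := by
  simp only [vecMul, dotProduct, zeta_apply, mul_ite, mul_one, mul_zero, sum_filter]

lemma mul_zeta_apply {m : Type*} (A : Matrix m E ℝ) (i : m) (e : E) :
    (A * zeta E) i e = ∑ e' ∈ univ.filter (· ≤ e), A i e' := by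
  simp only [mul_apply, zeta_apply, mul_ite, mul_one, mul_zero, sum_filter]

variable [DecidableEq E]

lemma mu_mul_zeta_eq_one [LocallyFiniteOrder E] :
    (of fun a b => IncidenceAlgebra.mu ℝ a b : Matrix E E ℝ) * zeta E = 1 := by
  ext a b
  rw [one_apply, ← IncidenceAlgebra.one_apply (𝕜 := ℝ), ← IncidenceAlgebra.mu_mul_zeta ℝ E,
    IncidenceAlgebra.mul_apply, mul_apply, eq_comm]
  refine sum_subset (subset_univ _) fun x _ hx => ?_
  rw [mem_Icc, not_and_or] at hx
  rcases hx with hax | hxb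
  · rw [IncidenceAlgebra.apply_eq_zero_of_not_le hax, zero_mul]
  · rw [IncidenceAlgebra.zeta_apply, if_neg hxb, mul_zero]

lemma zeta_inv_eq_mu [LocallyFiniteOrder E] :
    (zeta E)⁻¹ = of fun a b => IncidenceAlgebra.mu ℝ a b :=
  inv_eq_left_inv mu_mul_zeta_eq_one

lemma isUnit_det_zeta : IsUnit (zeta E).det := by
  classical
  let _ := Fintype.toLocallyFiniteOrder (α := E)
  exact isUnit_det_of_left_inverse mu_mul_zeta_eq_one

lemma zeta_inv_apply_of_not_le {e e' : E} (h : ¬ e ≤ e') : (zeta E)⁻¹ e e' = 0 := by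
  classical
  let _ := Fintype.toLocallyFiniteOrder (α := E)
  rw [zeta_inv_eq_mu, of_apply, IncidenceAlgebra.apply_eq_zero_of_not_le h]

lemma zeta_inv_mulVec_apply (v : E → ℝ) (e : E) :
    ((zeta E)⁻¹ *ᵥ v) e = ∑ e' ∈ univ.filter (e ≤ ·), (zeta E)⁻¹ e e' * v e' := by
  refine (sum_filter_of_ne fun e' _ hne => ?_).symm
  by_contra h
  simp [zeta_inv_apply_of_not_le h] at hne

end Zeta

namespace Matrix

variable {n K : Type*} [Fintype n] [DecidableEq n] [Field K]

noncomputable def timeReversal (π : n → K) (P : Matrix n n K) : Matrix n n K :=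
  diagonal π⁻¹ * Pᵀ * diagonal π

/-- For `C` the zeta matrix, `π ᵥ* C` is `H`, `dualLink C π` is `Λ` and
`dualMatrix C π ←P` is `P*`. -/
noncomputable def dualLink (C : Matrix n n K) (π : n → K) : Matrix n n K :=
  diagonal (π ᵥ* C)⁻¹ * Cᵀ * diagonal π

noncomputable def dualMatrix (C : Matrix n n K) (π : n → K) (Q : Matrix n n K) : Matrix n n K :=
  diagonal (π ᵥ* C)⁻¹ * (C⁻¹ * Q * C)ᵀ * diagonal (π ᵥ* C)

variable {C P Q : Matrix n n K} {π : n → K}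

lemma timeReversal_apply (i j : n) : timeReversal π P i j = π j * P j i / π i := by
  simp only [timeReversal, mul_diagonal, diagonal_mul, transpose_apply, Pi.inv_apply]
  ring

lemma dualLink_apply (i j : n) : dualLink C π i j = ((π ᵥ* C) i)⁻¹ * C j i * π j := by
  simp only [dualLink, mul_diagonal, diagonal_mul, transpose_apply, Pi.inv_apply]

lemma dualMatrix_apply (i j : n) :
    dualMatrix C π Q i j = (π ᵥ* C) j / (π ᵥ* C) i * (C⁻¹ * Q * C) j i := by
  simp only [dualMatrix, mul_diagonal, diagonal_mul, transpose_apply, Pi.inv_apply]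
  ring

lemma diagonal_mul_diagonal_inv {d : n → K} (hd : ∀ i, d i ≠ 0) :
    diagonal d * diagonal d⁻¹ = 1 := by
  rw [diagonal_mul_diagonal, ← diagonal_one]
  exact congrArg diagonal (funext fun i => mul_inv_cancel₀ (hd i))

lemma diagonal_inv_mul_diagonal {d : n → K} (hd : ∀ i, d i ≠ 0) :
    diagonal d⁻¹ * diagonal d = 1 := by
  rw [diagonal_mul_diagonal, ← diagonal_one]
  exact congrArg diagonal (funext fun i => inv_mul_cancel₀ (hd i))

lemma vecMul_timeReversal (hπ : ∀ i, π i ≠ 0) (hP : P *ᵥ 1 = 1) :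
    π ᵥ* timeReversal π P = π := by
  have hππ : π ᵥ* diagonal π⁻¹ = 1 := funext fun i => by
    rw [vecMul_diagonal, Pi.inv_apply, mul_inv_cancel₀ (hπ i), Pi.one_apply]
  rw [timeReversal, ← vecMul_vecMul, ← vecMul_vecMul, hππ, vecMul_transpose, hP]
  exact funext fun i => by rw [vecMul_diagonal, Pi.one_apply, one_mul]

lemma dualLink_mulVec_one (hH : ∀ i, (π ᵥ* C) i ≠ 0) : dualLink C π *ᵥ 1 = 1 := by
  have hπ : diagonal π *ᵥ 1 = π := funext fun i => by rw [mulVec_diagonal, Pi.one_apply, mul_one]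
  rw [dualLink, ← mulVec_mulVec, ← mulVec_mulVec, hπ, mulVec_transpose]
  exact funext fun i => by rw [mulVec_diagonal, Pi.inv_apply, inv_mul_cancel₀ (hH i), Pi.one_apply]

lemma vecMul_dualLink (hC : IsUnit C.det) (hH : ∀ i, (π ᵥ* C) i ≠ 0) (g : n → K) :
    ((π ᵥ* C) * (C⁻¹ *ᵥ g)) ᵥ* dualLink C π = g * π := by
  have hH' : ((π ᵥ* C) * (C⁻¹ *ᵥ g)) ᵥ* diagonal (π ᵥ* C)⁻¹ = C⁻¹ *ᵥ g := funext fun i => by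
    rw [vecMul_diagonal, Pi.mul_apply, Pi.inv_apply, mul_comm ((π ᵥ* C) i),
      mul_inv_cancel_right₀ (hH i)]
  rw [dualLink, ← vecMul_vecMul, ← vecMul_vecMul, hH', vecMul_transpose, mulVec_mulVec,
    mul_nonsing_inv _ hC, one_mulVec]
  exact funext fun i => vecMul_diagonal _ _ _

lemma dualMatrix_mulVec_one (hC : IsUnit C.det) (hH : ∀ i, (π ᵥ* C) i ≠ 0) (hQ : π ᵥ* Q = π) :
    dualMatrix C π Q *ᵥ 1 = 1 := by
  have hH1 : diagonal (π ᵥ* C) *ᵥ 1 = π ᵥ* C :=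
    funext fun i => by rw [mulVec_diagonal, Pi.one_apply, mul_one]
  have hHQ : π ᵥ* C ᵥ* (C⁻¹ * Q * C) = π ᵥ* C := by
    rw [vecMul_vecMul, mul_assoc, mul_nonsing_inv_cancel_left _ _ hC,
      ← vecMul_vecMul, hQ]
  rw [dualMatrix, ← mulVec_mulVec, ← mulVec_mulVec, hH1, mulVec_transpose, hHQ]
  exact funext fun i => by rw [mulVec_diagonal, Pi.inv_apply, inv_mul_cancel₀ (hH i), Pi.one_apply]

lemma dualLink_mul (hC : IsUnit C.det) (hπ : ∀ i, π i ≠ 0) (hH : ∀ i, (π ᵥ* C) i ≠ 0)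
    (P : Matrix n n K) :
    dualLink C π * P = dualMatrix C π (timeReversal π P) * dualLink C π := by
  have hCX : C * (C⁻¹ * timeReversal π P * C) = timeReversal π P * C := by
    rw [mul_assoc, mul_nonsing_inv_cancel_left _ _ hC]
  have hrev : (timeReversal π P)ᵀ * diagonal π = diagonal π * P := by
    rw [timeReversal, transpose_mul, transpose_mul, diagonal_transpose, diagonal_transpose,
      transpose_transpose, mul_assoc, mul_assoc P, diagonal_inv_mul_diagonal hπ, mul_one]
  calc dualLink C π * P
      = diagonal (π ᵥ* C)⁻¹ * (Cᵀ * (diagonal π * P)) := by simp only [dualLink, mul_assoc]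
    _ = diagonal (π ᵥ* C)⁻¹ * ((C * (C⁻¹ * timeReversal π P * C))ᵀ * diagonal π) := by
        rw [hCX, transpose_mul, mul_assoc, hrev]
    _ = diagonal (π ᵥ* C)⁻¹ * ((C⁻¹ * timeReversal π P * C)ᵀ *
          ((diagonal (π ᵥ* C) * diagonal (π ᵥ* C)⁻¹) * (Cᵀ * diagonal π))) := by
        rw [diagonal_mul_diagonal_inv hH, one_mul, transpose_mul, mul_assoc]
    _ = dualMatrix C π (timeReversal π P) * dualLink C π := by
        simp only [dualMatrix, dualLink, mul_assoc]

end Matrix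

section DualOfZeta

variable {E : Type*} [Fintype E] [DecidableEq E] [PartialOrder E]
  [DecidableRel ((· ≤ ·) : E → E → Prop)]

lemma dualLink_zeta_apply (π : E → ℝ) (i j : E) :
    dualLink (zeta E) π i j = if j ≤ i then π j / (π ᵥ* zeta E) i else 0 := by
  rw [dualLink_apply, zeta_apply]
  split_ifs <;> ring

lemma zeta_inv_mul_mul_zeta_apply (Q : Matrix E E ℝ) (i j : E) :
    ((zeta E)⁻¹ * Q * zeta E) i j =
      ∑ e ∈ univ.filter (i ≤ ·), (zeta E)⁻¹ i e * ∑ e' ∈ univ.filter (· ≤ j), Q e e' := by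
  simp only [← mul_zeta_apply, ← zeta_inv_mulVec_apply]
  rw [mul_assoc]
  rfl

end DualOfZeta

theorem stmt8_general {E : Type*} [Fintype E] [DecidableEq E] [PartialOrder E]
    [DecidableRel ((· ≤ ·) : E → E → Prop)]
    (P : Matrix E E ℝ) (hP : IsStochastic P)
    (π : E → ℝ) (hπpos : ∀ e, 0 < π e)
    (ν : E → ℝ) (hν : IsProbVec ν)
    (Prev : Matrix E E ℝ) (hPrev : ∀ e e', Prev e e' = π e' * P e' e / π e)
    (g : E → ℝ) (hg : ∀ e, g e = ν e / π e)
    (H : E → ℝ) (hH : ∀ e, H e = ∑ e' ∈ univ.filter (fun e' => e' ≤ e), π e')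
    (hgmon : ∀ e, 0 ≤ (g ᵥ* ((zeta E)ᵀ)⁻¹) e)
    (hPrevmon : ∀ e e', 0 ≤ ((zeta E)⁻¹ * Prev * zeta E) e e')
    (Λ : Matrix E E ℝ)
    (hΛ : ∀ ej ei, Λ ej ei = if ei ≤ ej then π ei / H ej else 0)
    (νd : E → ℝ)
    (hνd : ∀ ei, νd ei =
      H ei * ∑ e ∈ univ.filter (fun e => ei ≤ e), (zeta E)⁻¹ ei e * g e)
    (Pd : Matrix E E ℝ)
    (hPd : ∀ ei ej, Pd ei ej = (H ej / H ei) *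
      ∑ e ∈ univ.filter (fun e => ej ≤ e), (zeta E)⁻¹ ej e *
        (∑ e' ∈ univ.filter (fun e' => e' ≤ ei), Prev e e')) :
    IsStochastic Λ ∧ IsProbVec νd ∧ (∀ e, ν e = ∑ e', νd e' * Λ e' e) ∧
    IsStochastic Pd ∧ Λ * P = Pd * Λ := by
  have hπ0 : ∀ e, π e ≠ 0 := fun e => (hπpos e).ne'
  have hHpos : ∀ e, 0 < H e := fun e => by
    rw [hH]
    exact sum_pos (fun e' _ => hπpos e') ⟨e, by simp⟩
  obtain rfl : H = π ᵥ* zeta E := funext fun e => by rw [hH, vecMul_zeta_apply]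
  have hH0 : ∀ e, (π ᵥ* zeta E) e ≠ 0 := fun e => (hHpos e).ne'
  have hC : IsUnit (zeta E).det := isUnit_det_zeta
  obtain rfl : Prev = timeReversal π P := by ext; rw [hPrev, timeReversal_apply]
  obtain rfl : Λ = dualLink (zeta E) π := by ext; rw [hΛ, dualLink_zeta_apply]
  obtain rfl : νd = (π ᵥ* zeta E) * ((zeta E)⁻¹ *ᵥ g) :=
    funext fun e => by rw [hνd, Pi.mul_apply, zeta_inv_mulVec_apply]
  obtain rfl : Pd = dualMatrix (zeta E) π (timeReversal π P) := by
    ext; rw [hPd, dualMatrix_apply, zeta_inv_mul_mul_zeta_apply]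
  obtain rfl : ν = g * π := funext fun e => by rw [Pi.mul_apply, hg, div_mul_cancel₀ _ (hπ0 e)]
  have hgM : ∀ e, 0 ≤ ((zeta E)⁻¹ *ᵥ g) e := by
    simpa only [← transpose_nonsing_inv, vecMul_transpose] using hgmon
  have hΛ_stoch : IsStochastic (dualLink (zeta E) π) :=
    isStochastic_of_mulVec_one (fun i j => by
      rw [hΛ]; split_ifs; exacts [div_nonneg (hπpos j).le (hHpos i).le, le_rfl])
      (dualLink_mulVec_one hH0)
  refine ⟨hΛ_stoch, ⟨fun e => mul_nonneg (hHpos e).le (hgM e), ?_⟩,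
    fun e => by rw [← vecMul_dualLink hC hH0 g]; rfl, ?_, dualLink_mul hC hπ0 hH0 P⟩
  · rw [← hΛ_stoch.sum_vecMul, vecMul_dualLink hC hH0 g, hν.2]
  · refine isStochastic_of_mulVec_one (fun i j => ?_)
      (dualMatrix_mulVec_one hC hH0 (vecMul_timeReversal hπ0 hP.mulVec_one))
    rw [dualMatrix_apply]
    exact mul_nonneg (div_nonneg (hHpos j).le (hHpos i).le) (hPrevmon j i)

/-- strong stationary duality for ↓-Möbius monotone chains.  With
`μ = (zeta E)⁻¹`, `H(e) = Σ_{e' ≤ e} π(e')`, `g = ν/π`, time reversal `←P`,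
link `Λ(e_j,e_i) = 1{e_i ≤ e_j} π(e_i)/H(e_j)`,
`ν*(e_i) = H(e_i) Σ_{e ≥ e_i} μ(e_i,e) g(e)` and
`P*(e_i,e_j) = (H(e_j)/H(e_i)) Σ_{e ≥ e_j} μ(e_j,e) ←P(e,{e_i}↓)`:
if `g` is ↓-Möbius monotone and `←P` is ↓-Möbius monotone, then `Λ` is
stochastic, `ν*` is a probability vector with `ν = ν*Λ`, and `P*` is stochastic
with `ΛP = P*Λ`. -/
theorem stmt8 {E : Type*} [Fintype E] [DecidableEq E] [PartialOrder E]
    [DecidableRel ((· ≤ ·) : E → E → Prop)]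
    (eM : E) (hmax : ∀ e, e ≤ eM)
    (P : Matrix E E ℝ) (hP : IsStochastic P)
    (hirr : ∀ e e' : E, ∃ n : ℕ, 0 < (P ^ n) e e')
    (π : E → ℝ) (hπ : IsProbVec π) (hπpos : ∀ e, 0 < π e)
    (hstat : ∀ e', ∑ e, π e * P e e' = π e')
    (ν : E → ℝ) (hν : IsProbVec ν)
    (Prev : Matrix E E ℝ) (hPrev : ∀ e e', Prev e e' = π e' * P e' e / π e)
    (g : E → ℝ) (hg : ∀ e, g e = ν e / π e)
    (H : E → ℝ) (hH : ∀ e, H e = ∑ e' ∈ univ.filter (fun e' => e' ≤ e), π e')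
    (hgmon : ∀ e, 0 ≤ (g ᵥ* ((zeta E)ᵀ)⁻¹) e)
    (hPrevmon : ∀ e e', 0 ≤ ((zeta E)⁻¹ * Prev * zeta E) e e')
    (Λ : Matrix E E ℝ)
    (hΛ : ∀ ej ei, Λ ej ei = if ei ≤ ej then π ei / H ej else 0)
    (νd : E → ℝ)
    (hνd : ∀ ei, νd ei =
      H ei * ∑ e ∈ univ.filter (fun e => ei ≤ e), (zeta E)⁻¹ ei e * g e)
    (Pd : Matrix E E ℝ)
    (hPd : ∀ ei ej, Pd ei ej = (H ej / H ei) *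
      ∑ e ∈ univ.filter (fun e => ej ≤ e), (zeta E)⁻¹ ej e *
        (∑ e' ∈ univ.filter (fun e' => e' ≤ ei), Prev e e')) :
    IsStochastic Λ ∧ IsProbVec νd ∧ (∀ e, ν e = ∑ e', νd e' * Λ e' e) ∧
    IsStochastic Pd ∧ Λ * P = Pd * Λ :=
  stmt8_general P hP π hπpos ν hν Prev hPrev g hg H hH hgmon hPrevmon Λ hΛ νd hνd Pd hPd
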